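/- arXiv:0902.0277 — 8 statements merged into one kernel-verified Lean document; each statement's English description precedes it below -/
import Mathlib

section
/- Let A be a C*-algebra and let a′₁, …, a′ₙ, x₁, …, xₙ, c₁, …, cₘ, d₁, …, dₘ ∈ A be such that each a′ᵢ commutes with each cⱼ* (that is, a′ᵢ cⱼ* = cⱼ* a′ᵢ for all i, j). Then ‖∑_{i=1}^n a′ᵢ (∑_{j=1}^m cⱼ* xᵢ dⱼ)‖ ≤ ‖∑_{j=1}^m cⱼ* cⱼ‖^{1/2} · ‖∑_{i=1}^n a′ᵢ xᵢ‖ · ‖∑_{j=1}^m dⱼ* dⱼ‖^{1/2}. -/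
/-!
Since each `a'ᵢ` commutes with each `cⱼ*`, the left-hand side is `∑ⱼ cⱼ* y dⱼ` with
`y = ∑ᵢ a'ᵢ xᵢ`. Writing `cⱼ* y dⱼ = (y* cⱼ)* dⱼ`, the Cauchy–Schwarz inequality in the Hilbert
C⋆-module of columns bounds this by `‖∑ⱼ cⱼ* y y* cⱼ‖^{1/2} ‖∑ⱼ dⱼ* dⱼ‖^{1/2}`, and
`cⱼ* y y* cⱼ ≤ ‖y‖² cⱼ* cⱼ` in the spectral order.
-/

open scoped InnerProductSpace

section StarOrdered

variable {A : Type*} [NonUnitalCStarAlgebra A] [PartialOrder A] [StarOrderedRing A]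
  {ι : Type*} [Fintype ι]

lemma CStarAlgebra.norm_sum_star_mul_le (a b : ι → A) :
    ‖∑ j, star (a j) * b j‖ ≤ √‖∑ j, star (a j) * a j‖ * √‖∑ j, star (b j) * b j‖ := by
  let col (f : ι → A) : WithCStarModule A (ι → A) := (WithCStarModule.equiv A _).symm (star f)
  have inner_col (f g : ι → A) : ⟪col g, col f⟫_A = ∑ j, star (f j) * g j := by
    simp [col, WithCStarModule.pi_inner, WithCStarModule.inner_def]
  have norm_col (f : ι → A) : ‖col f‖ = √‖∑ j, star (f j) * f j‖ := by
    rw [WithCStarModule.pi_norm, ← WithCStarModule.pi_inner, inner_col]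
  rw [← inner_col, ← norm_col, ← norm_col, mul_comm]
  exact CStarModule.norm_inner_le _

lemma CStarAlgebra.norm_sum_star_mul_mul_le_of_nonneg {b : A} (hb : 0 ≤ b) (c : ι → A) :
    ‖∑ j, star (c j) * b * c j‖ ≤ ‖b‖ * ‖∑ j, star (c j) * c j‖ := by
  have hle : ∑ j, star (c j) * b * c j ≤ ‖b‖ • ∑ j, star (c j) * c j := by
    rw [Finset.smul_sum]
    exact Finset.sum_le_sum fun j _ => CStarAlgebra.star_left_conjugate_le_norm_smul
  have hnonneg : 0 ≤ ∑ j, star (c j) * b * c j :=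
    Finset.sum_nonneg fun j _ => star_left_conjugate_nonneg hb _
  simpa [norm_smul] using CStarAlgebra.norm_le_norm_of_nonneg_of_le hnonneg hle

lemma CStarAlgebra.norm_sum_star_mul_mul_le (c : ι → A) (y : A) (d : ι → A) :
    ‖∑ j, star (c j) * y * d j‖ ≤
      √‖∑ j, star (c j) * c j‖ * ‖y‖ * √‖∑ j, star (d j) * d j‖ := by
  have hcol : ∑ j, star (star y * c j) * (star y * c j) =
      ∑ j, star (c j) * (y * star y) * c j := by
    simp only [star_mul, star_star, mul_assoc]
  have hconj := norm_sum_star_mul_mul_le_of_nonneg (mul_star_self_nonneg y) c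
  rw [CStarRing.norm_self_mul_star, ← hcol] at hconj
  calc ‖∑ j, star (c j) * y * d j‖
      = ‖∑ j, star (star y * c j) * d j‖ := by simp only [star_mul, star_star]
    _ ≤ √‖∑ j, star (star y * c j) * (star y * c j)‖ * √‖∑ j, star (d j) * d j‖ :=
        norm_sum_star_mul_le _ d
    _ ≤ √(‖y‖ * ‖y‖ * ‖∑ j, star (c j) * c j‖) * √‖∑ j, star (d j) * d j‖ := by gcongr
    _ = √‖∑ j, star (c j) * c j‖ * ‖y‖ * √‖∑ j, star (d j) * d j‖ := by
        rw [Real.sqrt_mul (by positivity), Real.sqrt_mul_self (norm_nonneg y)]; ring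

end StarOrdered

lemma sum_mul_sum_mul_mul_eq_of_commute {R : Type*} [NonUnitalSemiring R] {ι κ : Type*}
    [Fintype ι] [Fintype κ] (a x : ι → R) (c d : κ → R) (h : ∀ i j, Commute (a i) (c j)) :
    ∑ i, a i * ∑ j, c j * x i * d j = ∑ j, c j * (∑ i, a i * x i) * d j := by
  simp only [Finset.mul_sum, Finset.sum_mul]
  rw [Finset.sum_comm]
  refine Finset.sum_congr rfl fun j _ => Finset.sum_congr rfl fun i _ => ?_
  rw [← mul_assoc, ← mul_assoc, (h i j).eq, mul_assoc (c j)]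

/-- The computation in the proof of (i) ⇒ (ii) of Theorem 2.1 of Magajna, "Pointwise
approximation by elementary complete contractions": if each `a'ᵢ` commutes with each `cⱼ*`,
then `‖∑ᵢ a'ᵢ (∑ⱼ cⱼ* xᵢ dⱼ)‖ ≤ ‖∑ⱼ cⱼ* cⱼ‖^{1/2} ‖∑ᵢ a'ᵢ xᵢ‖ ‖∑ⱼ dⱼ* dⱼ‖^{1/2}`. -/
theorem norm_sum_commutant_elementary_le
    {A : Type*} [NonUnitalCStarAlgebra A] {n m : ℕ}
    (a' x : Fin n → A) (c d : Fin m → A)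
    (hcomm : ∀ i j, a' i * star (c j) = star (c j) * a' i) :
    ‖∑ i, a' i * (∑ j, star (c j) * x i * d j)‖ ≤
      Real.sqrt ‖∑ j, star (c j) * c j‖ * ‖∑ i, a' i * x i‖ *
        Real.sqrt ‖∑ j, star (d j) * d j‖ := by
  let _ := CStarAlgebra.spectralOrder A
  have := CStarAlgebra.spectralOrderedRing A
  rw [sum_mul_sum_mul_mul_eq_of_commute a' x (fun j => star (c j)) d hcomm]
  exact CStarAlgebra.norm_sum_star_mul_mul_le c _ d
end

section
/- Let q : A → B be a surjective *-homomorphism of C*-algebras, let n ∈ ℕ, and let b₁, …, bₙ ∈ B satisfy ‖∑_{i=1}^n bᵢ* bᵢ‖ < 1. Then there exist a₁, …, aₙ ∈ A with q(aᵢ) = bᵢ for all i and ‖∑_{i=1}^n aᵢ* aᵢ‖ < 1. -/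
/-!
Lift the `bᵢ` arbitrarily to `cᵢ` and put `x = ∑ cᵢ⋆ cᵢ ≥ 0`, so that `‖q x‖ < r < 1` for some `r`.
For `g t = √(r / max r t)`, which is `1` on `[0, r]`, the corrected lifts `aᵢ = cᵢ g(x)` still lift
the `bᵢ`, because `q (g x) = g (q x) = 1`, while `∑ aᵢ⋆ aᵢ = g(x) x g(x) = min x r` has norm at most
`r`. As `A` need not be unital, `g(x)` is written as `1 - m` with `m = cfcₙ (1 - g) x`.
-/

section StarCompression

variable {R : Type*} [NonUnitalRing R] [StarRing R]

lemma star_sub_mul_mul_sub_mul (c : R) {m : R} (hm : IsSelfAdjoint m) :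
    star (c - c * m) * (c - c * m) =
      star c * c - star c * c * m - m * (star c * c - star c * c * m) := by
  simp only [star_sub, star_mul, hm.star_eq]
  noncomm_ring

lemma sum_star_sub_mul_mul_sub_mul {ι : Type*} (s : Finset ι) (c : ι → R) {m : R}
    (hm : IsSelfAdjoint m) :
    ∑ i ∈ s, star (c i - c i * m) * (c i - c i * m) =
      (∑ i ∈ s, star (c i) * c i) - (∑ i ∈ s, star (c i) * c i) * m
        - m * ((∑ i ∈ s, star (c i) * c i) - (∑ i ∈ s, star (c i) * c i) * m) := by
  simp only [star_sub_mul_mul_sub_mul _ hm, Finset.sum_sub_distrib, ← Finset.sum_mul,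
    ← Finset.mul_sum]

end StarCompression

section CFC

variable {A : Type*} [NonUnitalRing A] [StarRing A] [TopologicalSpace A] [Module ℝ A]
  [IsScalarTower ℝ A A] [SMulCommClass ℝ A A]
  [NonUnitalContinuousFunctionalCalculus ℝ A IsSelfAdjoint]

lemma sub_mul_cfcₙ_sub_cfcₙ_mul_sub_mul_cfcₙ {a : A} (ha : IsSelfAdjoint a) {k : ℝ → ℝ}
    (hk : Continuous k) (hk0 : k 0 = 0) :
    a - a * cfcₙ k a - cfcₙ k a * (a - a * cfcₙ k a) = cfcₙ (fun t ↦ t * (1 - k t) ^ 2) a := by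
  have h : a - a * cfcₙ k a = cfcₙ (fun t ↦ t - t * k t) a := by
    rw [cfcₙ_sub _ _ a, cfcₙ_mul _ _ a, cfcₙ_id' ℝ a]
  rw [h, ← cfcₙ_mul _ _ a, ← cfcₙ_sub _ _ a]
  congr! 2 with t
  ring

end CFC

open scoped CStarAlgebra

section CStarAlgebra

variable {A : Type*} [NonUnitalCStarAlgebra A]

lemma le_norm_of_mem_quasispectrum {a : A} (ha : IsSelfAdjoint a) {t : ℝ}
    (ht : t ∈ quasispectrum ℝ a) : t ≤ ‖a‖ :=
  (Real.le_norm_self t).trans <| by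
    simpa [cfcₙ_id ℝ a] using norm_apply_le_norm_cfcₙ id a ht

lemma cfcₙ_eq_zero_of_forall_le_norm {a : A} (ha : IsSelfAdjoint a) {k : ℝ → ℝ}
    (hk : ∀ t ≤ ‖a‖, k t = 0) : cfcₙ k a = 0 :=
  (cfcₙ_congr fun t ht ↦ hk t (le_norm_of_mem_quasispectrum ha ht)).trans (cfcₙ_zero ℝ a)

lemma norm_cfcₙ_min_le [PartialOrder A] [StarOrderedRing A] {a : A} (ha : 0 ≤ a) {r : ℝ}
    (hr : 0 ≤ r) : ‖cfcₙ (fun t ↦ min t r) a‖ ≤ r :=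
  norm_cfcₙ_le fun t ht ↦ by
    rw [Real.norm_of_nonneg (le_min (quasispectrum_nonneg_of_nonneg a ha t ht) hr)]
    exact min_le_right t r

end CStarAlgebra

namespace Real

lemma continuous_sqrt_div_max {r : ℝ} (hr : 0 < r) : Continuous fun t ↦ √(r / max r t) :=
  (continuous_const.div (continuous_const.max continuous_id)
    fun t ↦ (hr.trans_le (le_max_left r t)).ne').sqrt

lemma sqrt_div_max_of_le {r t : ℝ} (hr : r ≠ 0) (ht : t ≤ r) : √(r / max r t) = 1 := by
  rw [max_eq_left ht, div_self hr, sqrt_one]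

lemma mul_sqrt_div_max_sq {r : ℝ} (hr : 0 < r) (t : ℝ) : t * √(r / max r t) ^ 2 = min t r := by
  rcases le_total t r with ht | ht
  · rw [sqrt_div_max_of_le hr.ne' ht, min_eq_left ht, one_pow, mul_one]
  · rw [max_eq_right ht, sq_sqrt (div_nonneg hr.le (hr.le.trans ht)), min_eq_right ht,
      mul_div_cancel₀ r (hr.trans_le ht).ne']

end Real

/-- **Column lifting** (used in the proof of Proposition 3.2 of Magajna, "Pointwise
approximation by elementary complete contractions"): if `q : A → B` is a surjective
*-homomorphism of C*-algebras and `b₁, …, bₙ ∈ B` satisfy `‖∑ bᵢ* bᵢ‖ < 1`, then there are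
lifts `aᵢ ∈ A` of the `bᵢ` with `‖∑ aᵢ* aᵢ‖ < 1`. -/
theorem exists_lift_column_norm_lt_one
    {A B : Type*} [NonUnitalCStarAlgebra A] [NonUnitalCStarAlgebra B]
    (q : A →⋆ₙₐ[ℂ] B) (hq : Function.Surjective q) (n : ℕ) (b : Fin n → B)
    (hb : ‖∑ i, star (b i) * b i‖ < 1) :
    ∃ a : Fin n → A, (∀ i, q (a i) = b i) ∧ ‖∑ i, star (a i) * a i‖ < 1 := by
  -- `A` carries no order instance; positivity is meant in the spectral order.
  let _ := CStarAlgebra.spectralOrder A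
  have := CStarAlgebra.spectralOrderedRing A
  choose c hc using fun i ↦ hq (b i)
  set x : A := ∑ i, star (c i) * c i
  have hx : 0 ≤ x := Finset.sum_nonneg fun i _ ↦ star_mul_self_nonneg (c i)
  have hqx : q x = ∑ i, star (b i) * b i := by simp [x, map_star, hc]
  rw [← hqx] at hb
  obtain ⟨r, hxr, hr1⟩ := exists_between hb
  have hr : 0 < r := (norm_nonneg _).trans_lt hxr
  set k : ℝ → ℝ := fun t ↦ 1 - √(r / max r t)
  have hk : Continuous k := continuous_const.sub (Real.continuous_sqrt_div_max hr)
  have hk_le : ∀ t ≤ r, k t = 0 := fun t ht ↦ by simp [k, Real.sqrt_div_max_of_le hr.ne' ht]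
  have hqm : q (cfcₙ k x) = 0 := by
    have hqx_sa : IsSelfAdjoint (q x) := hx.isSelfAdjoint.map q
    rw [q.map_cfcₙ k x hk.continuousOn (hk_le 0 hr.le) (map_continuous q) hx.isSelfAdjoint hqx_sa]
    exact cfcₙ_eq_zero_of_forall_le_norm hqx_sa fun t ht ↦ hk_le t (ht.trans hxr.le)
  refine ⟨fun i ↦ c i - c i * cfcₙ k x, fun i ↦ by simp [hc, hqm], ?_⟩
  rw [sum_star_sub_mul_mul_sub_mul _ _ (cfcₙ_predicate k x),
    sub_mul_cfcₙ_sub_cfcₙ_mul_sub_mul_cfcₙ hx.isSelfAdjoint hk (hk_le 0 hr.le)]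
  simp only [k, sub_sub_cancel, Real.mul_sqrt_div_max_sq hr]
  exact (norm_cfcₙ_min_le hx hr.le).trans_lt hr1
end

section
/- Let F₂ be the free group on two generators g₁, g₂ and let ℓ²(F₂) be the Hilbert space of square-summable complex-valued functions on F₂. For g ∈ F₂ let L_g and R_g be the left and right translation unitaries on ℓ²(F₂), given by (L_g ξ)(h) = ξ(g⁻¹h) and (R_g ξ)(h) = ξ(hg). Then the bounded operator T₂ := 1 + L_{g₁}R_{g₂} + L_{g₁⁻¹}R_{g₂⁻¹} + L_{g₂}R_{g₁} on ℓ²(F₂) has operator norm at most 4 − 1/784. -/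
open scoped ENNReal

noncomputable section

/-- The free group `F₂` on two generators. -/
abbrev F₂ : Type := FreeGroup (Fin 2)

/-- The first generator `g₁` of `F₂`. -/
def g₁ : F₂ := FreeGroup.of 0

/-- The second generator `g₂` of `F₂`. -/
def g₂ : F₂ := FreeGroup.of 1

/-- The Hilbert space `ℓ²(F₂)` of square-summable complex functions on `F₂`. -/
abbrev l2F₂ := lp (fun _ : F₂ => ℂ) 2

lemma memℓp_comp_equiv {α β : Type*} {f : β → ℂ} (e : α ≃ β) (hf : Memℓp f 2) :
    Memℓp (fun a => f (e a)) 2 := by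
  apply memℓp_gen
  exact (e.summable_iff (f := fun b => ‖f b‖ ^ (2 : ℝ≥0∞).toReal)).mpr
    (hf.summable (by norm_num))

/-- The linear isometry of `ℓ²` spaces induced by composition with an equivalence of the
index sets. -/
def lpCompEquiv {α β : Type*} (e : α ≃ β) :
    lp (fun _ : β => ℂ) 2 ≃ₗᵢ[ℂ] lp (fun _ : α => ℂ) 2 where
  toFun f := ⟨fun a => f (e a), memℓp_comp_equiv e (lp.memℓp f)⟩
  invFun f := ⟨fun b => f (e.symm b), memℓp_comp_equiv e.symm (lp.memℓp f)⟩
  left_inv f := by apply lp.ext; funext b; simp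
  right_inv f := by apply lp.ext; funext a; simp
  map_add' f g := by apply lp.ext; funext a; rfl
  map_smul' c f := by apply lp.ext; funext a; rfl
  norm_map' f := by
    rw [lp.norm_eq_tsum_rpow (by norm_num), lp.norm_eq_tsum_rpow (by norm_num)]
    congr 1
    exact e.tsum_eq (fun b => ‖f b‖ ^ (2 : ℝ≥0∞).toReal)

/-- The left translation unitary `L g` on `ℓ²(F₂)`, given by `(L g ξ) h = ξ (g⁻¹ * h)`. -/
def L (g : F₂) : l2F₂ →L[ℂ] l2F₂ :=
  (lpCompEquiv ((Equiv.mulLeft g).symm)).toLinearIsometry.toContinuousLinearMap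

/-- The right translation unitary `R g` on `ℓ²(F₂)`, given by `(R g ξ) h = ξ (h * g)`. -/
def R (g : F₂) : l2F₂ →L[ℂ] l2F₂ :=
  (lpCompEquiv (Equiv.mulRight g)).toLinearIsometry.toContinuousLinearMap

@[simp] lemma L_def (g : F₂) (ξ : l2F₂) (h : F₂) : L g ξ h = ξ (g⁻¹ * h) := rfl

@[simp] lemma R_def (g : F₂) (ξ : l2F₂) (h : F₂) : R g ξ h = ξ (h * g) := rfl

/-!
Write `u = L g₁ * R g₂` and `v = L g₂ * R g₁`. In any inner product space
`‖a + b + c + d‖² ≤ 4 (‖a‖² + ‖b‖² + ‖c‖² + ‖d‖²) - ‖b - a‖² - ‖d - a‖²` (Lagrange's identity),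
so `‖T₂ ξ‖² ≤ 16 ‖ξ‖² - ‖u ξ - ξ‖² - ‖v ξ - ξ‖²` and it suffices to show that no unit vector is
almost invariant under both `u` and `v`. Now `(u ξ) h = ξ (g₁⁻¹ h g₂)`, and `h ↦ g₁⁻¹ h g₂` maps
the reduced words not starting with `g₁` to words starting with `g₁⁻¹`. Hence the `ℓ²`-mass of `ξ`
off the words starting with `g₁` is at most `3/2` times its mass on the words starting with `g₁⁻¹`
plus `3 ‖u ξ - ξ‖²`, and likewise for `v` and `g₂`. As the four sets of words starting with
`g₁^{±1}`, `g₂^{±1}` are disjoint, adding up gives `‖ξ‖² ≤ 6 (‖u ξ - ξ‖² + ‖v ξ - ξ‖²)`.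
-/

open Function Set

namespace FreeGroup
variable {α : Type*}

lemma inv_mk_singleton (y : α × Bool) : (mk [y])⁻¹ = mk [(y.1, !y.2)] := inv_mk

variable [DecidableEq α]

def startingWith (x : α × Bool) : Set (FreeGroup α) := {g | g.toWord.head? = some x}

lemma mem_startingWith {x : α × Bool} {g : FreeGroup α} :
    g ∈ startingWith x ↔ g.toWord.head? = some x := Iff.rfl

lemma pairwise_disjoint_startingWith :
    Pairwise (Disjoint on (startingWith : α × Bool → Set (FreeGroup α))) :=
  fun _ _ hxy => disjoint_left.2 fun _ hx hy => hxy (Option.some_injective _ (hx.symm.trans hy))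

lemma toWord_mk_singleton_mul {x : α × Bool} {g : FreeGroup α}
    (hg : g.toWord.head? ≠ some (x.1, !x.2)) : (mk [x] * g).toWord = x :: g.toWord := by
  have hred : IsReduced (x :: g.toWord) := by
    rcases hw : g.toWord with _ | ⟨y, w⟩
    · exact .singleton
    · rw [hw] at hg
      refine isReduced_cons_cons.2 ⟨fun h₁ => ?_, hw ▸ isReduced_toWord⟩
      by_contra h₂
      exact hg (by simp [h₁, Bool.eq_not_of_ne h₂])
  rw [← mk_toWord (x := g), mul_mk, toWord_mk, List.singleton_append, mk_toWord, hred.reduce_eq]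

lemma toWord_mul_mk_singleton (g : FreeGroup α) (y : α × Bool) :
    (g * mk [y]).toWord = g.toWord ++ [y] ∨
      g.toWord = (g * mk [y]).toWord ++ [(y.1, !y.2)] := by
  by_cases hlast : g.toWord.getLast? = some (y.1, !y.2)
  · right
    obtain ⟨w, hw⟩ : ∃ w, g.toWord = w ++ [(y.1, !y.2)] :=
      ⟨_, (List.dropLast_append_getLast? _ hlast).symm⟩
    have hg : g * mk [y] = mk w := by
      rw [← mk_toWord (x := g), hw, ← mul_mk, ← inv_mk_singleton, inv_mul_cancel_right]
    have hred : IsReduced w := isReduced_toWord.infix (hw ▸ List.prefix_append _ _).isInfix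
    rw [hg, toWord_mk, hred.reduce_eq, hw]
  · left
    have hred : IsReduced (g.toWord ++ [y]) := by
      refine List.isChain_append.2
        ⟨isReduced_toWord, List.isChain_singleton y, fun a ha b hb h₁ => ?_⟩
      obtain rfl : b = y := by simpa using hb.symm
      by_contra h₂
      rw [Option.mem_def] at ha
      exact hlast (ha ▸ congrArg some (Prod.ext h₁ (Bool.eq_not_of_ne h₂)))
    rw [← mk_toWord (x := g), mul_mk, toWord_mk, mk_toWord, hred.reduce_eq]

lemma mul_mk_singleton_mem_startingWith {x y : α × Bool} (hxy : x.1 ≠ y.1) {g : FreeGroup α}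
    (hg : g ∈ startingWith x) : g * mk [y] ∈ startingWith x := by
  rw [mem_startingWith] at hg ⊢
  rcases toWord_mul_mk_singleton g y with h | h
  · rw [h, List.head?_append, hg]; rfl
  · rw [h] at hg
    rcases hw : (g * mk [y]).toWord with _ | ⟨z, w⟩
    · rw [hw] at hg
      exact absurd (congrArg Prod.fst (Option.some_injective _ hg)) (Ne.symm hxy)
    · rw [hw] at hg
      simpa using hg

lemma mk_singleton_mul_mul_mk_singleton_mem_startingWith {x y : α × Bool} (hxy : x.1 ≠ y.1)
    {g : FreeGroup α} (hg : g ∉ startingWith (x.1, !x.2)) :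
    mk [x] * g * mk [y] ∈ startingWith x := by
  have hgy : g * mk [y] ∉ startingWith (x.1, !x.2) := fun h => hg <| by
    have := mul_mk_singleton_mem_startingWith (x := (x.1, !x.2)) (y := (y.1, !y.2)) hxy h
    rwa [mul_assoc, ← inv_mk_singleton, mul_inv_cancel, mul_one] at this
  rw [mul_assoc, mem_startingWith, toWord_mk_singleton_mul hgy]
  rfl

end FreeGroup

section normSqOn

variable {α E : Type*} [NormedAddCommGroup E]

lemma norm_sq_le_norm_sq_add_norm_sub_sq (x y : E) :
    ‖y‖ ^ 2 ≤ 3 / 2 * ‖x‖ ^ 2 + 3 * ‖x - y‖ ^ 2 := by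
  have := pow_le_pow_left₀ (norm_nonneg y) (norm_le_norm_add_norm_sub x y) 2
  nlinarith [sq_nonneg (‖x‖ - 2 * ‖x - y‖)]

lemma lp.summable_norm_sq (ξ : lp (fun _ : α => E) 2) : Summable fun a => ‖ξ a‖ ^ 2 := by
  simpa using (lp.memℓp ξ).summable (by norm_num : 0 < (2 : ℝ≥0∞).toReal)

lemma lp.norm_sq_eq_tsum (ξ : lp (fun _ : α => E) 2) : ‖ξ‖ ^ 2 = ∑' a, ‖ξ a‖ ^ 2 := by
  simpa using lp.norm_rpow_eq_tsum (by norm_num : 0 < (2 : ℝ≥0∞).toReal) ξ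

def normSqOn (ξ : lp (fun _ : α => E) 2) (S : Set α) : ℝ :=
  ∑' a, S.indicator (fun a => ‖ξ a‖ ^ 2) a

variable (ξ : lp (fun _ : α => E) 2)

lemma summable_indicator_norm_sq (S : Set α) :
    Summable (S.indicator fun a => ‖ξ a‖ ^ 2) :=
  (lp.summable_norm_sq ξ).indicator S

lemma normSqOn_nonneg (S : Set α) : 0 ≤ normSqOn ξ S :=
  tsum_nonneg fun _ => indicator_nonneg (fun _ _ => by positivity) _

lemma normSqOn_mono {S T : Set α} (hST : S ⊆ T) : normSqOn ξ S ≤ normSqOn ξ T :=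
  (summable_indicator_norm_sq ξ S).tsum_le_tsum
    (indicator_le_indicator_of_subset hST fun _ => by positivity)
    (summable_indicator_norm_sq ξ T)

lemma normSqOn_univ : normSqOn ξ univ = ‖ξ‖ ^ 2 := by
  rw [normSqOn, indicator_univ, lp.norm_sq_eq_tsum]

lemma normSqOn_add_normSqOn_compl (S : Set α) : normSqOn ξ S + normSqOn ξ Sᶜ = ‖ξ‖ ^ 2 := by
  rw [normSqOn, normSqOn, ← (summable_indicator_norm_sq ξ S).tsum_add
    (summable_indicator_norm_sq ξ Sᶜ), lp.norm_sq_eq_tsum]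
  simp_rw [indicator_self_add_compl_apply]

lemma sum_normSqOn_le {ι : Type*} (s : Finset ι) {S : ι → Set α}
    (hS : (s : Set ι).PairwiseDisjoint S) : ∑ i ∈ s, normSqOn ξ (S i) ≤ ‖ξ‖ ^ 2 := by
  have hunion : ∑ i ∈ s, normSqOn ξ (S i) = normSqOn ξ (⋃ i ∈ s, S i) := by
    unfold normSqOn
    rw [← Summable.tsum_finsetSum fun i _ => summable_indicator_norm_sq ξ (S i)]
    simp_rw [Finset.indicator_biUnion_apply s S hS]
  rw [hunion, ← normSqOn_univ]
  exact normSqOn_mono ξ (subset_univ _)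

lemma normSqOn_preimage {η : lp (fun _ : α => E) 2} (e : α ≃ α) (hη : ∀ a, η a = ξ (e a))
    (T : Set α) : normSqOn η (e ⁻¹' T) = normSqOn ξ T := by
  have hη' : (fun a => ‖η a‖ ^ 2) = (fun b => ‖ξ b‖ ^ 2) ∘ e := funext fun a => by rw [hη]; rfl
  rw [normSqOn, normSqOn, hη', ← e.tsum_eq (T.indicator _)]
  exact tsum_congr fun _ => indicator_comp_right _

lemma normSqOn_le_normSqOn_add (η : lp (fun _ : α => E) 2) (S : Set α) :
    normSqOn ξ S ≤ 3 / 2 * normSqOn η S + 3 * ‖η - ξ‖ ^ 2 := by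
  have hsum : Summable fun a => 3 / 2 * S.indicator (fun a => ‖η a‖ ^ 2) a
      + 3 * ‖(η - ξ) a‖ ^ 2 :=
    ((summable_indicator_norm_sq η S).mul_left _).add ((lp.summable_norm_sq _).mul_left _)
  rw [normSqOn, normSqOn, lp.norm_sq_eq_tsum, ← tsum_mul_left, ← tsum_mul_left,
    ← Summable.tsum_add ((summable_indicator_norm_sq η S).mul_left _)
      ((lp.summable_norm_sq _).mul_left _)]
  refine (summable_indicator_norm_sq ξ S).tsum_le_tsum (fun a => ?_) hsum
  by_cases ha : a ∈ S
  · simpa [ha] using norm_sq_le_norm_sq_add_norm_sub_sq (η a) (ξ a)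
  · simp only [indicator_of_notMem ha]
    positivity

lemma norm_sq_le_normSqOn_add_of_mapsTo {η : lp (fun _ : α => E) 2} (e : α ≃ α)
    (hη : ∀ a, η a = ξ (e a)) {S T : Set α} (hST : MapsTo e Sᶜ T) :
    ‖ξ‖ ^ 2 ≤ normSqOn ξ S + 3 / 2 * normSqOn ξ T + 3 * ‖η - ξ‖ ^ 2 := by
  have hη_compl : normSqOn η Sᶜ ≤ normSqOn ξ T :=
    normSqOn_preimage ξ e hη T ▸ normSqOn_mono η hST
  linarith [normSqOn_add_normSqOn_compl ξ S, normSqOn_le_normSqOn_add ξ η Sᶜ]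

end normSqOn

lemma norm_add_add_add_sq_add_norm_sub_sq_add_norm_sub_sq_le {𝕜 F : Type*} [RCLike 𝕜]
    [NormedAddCommGroup F] [InnerProductSpace 𝕜 F] (a b c d : F) :
    ‖a + b + c + d‖ ^ 2 + ‖b - a‖ ^ 2 + ‖d - a‖ ^ 2 ≤
      4 * (‖a‖ ^ 2 + ‖b‖ ^ 2 + ‖c‖ ^ 2 + ‖d‖ ^ 2) := by
  have lagrange : ‖a + b + c + d‖ ^ 2 + ‖b - a‖ ^ 2 + ‖d - a‖ ^ 2 + ‖c - a‖ ^ 2 + ‖c - b‖ ^ 2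
      + ‖d - b‖ ^ 2 + ‖d - c‖ ^ 2 = 4 * (‖a‖ ^ 2 + ‖b‖ ^ 2 + ‖c‖ ^ 2 + ‖d‖ ^ 2) := by
    simp only [@norm_add_sq 𝕜, @norm_sub_sq 𝕜, inner_add_left, map_add]
    rw [inner_re_symm (𝕜 := 𝕜) b a, inner_re_symm (𝕜 := 𝕜) c a, inner_re_symm (𝕜 := 𝕜) d a,
      inner_re_symm (𝕜 := 𝕜) c b, inner_re_symm (𝕜 := 𝕜) d b, inner_re_symm (𝕜 := 𝕜) d c]
    ring
  nlinarith [sq_nonneg ‖c - a‖, sq_nonneg ‖c - b‖, sq_nonneg ‖d - b‖, sq_nonneg ‖d - c‖]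

lemma L_mul_R_apply (g g' : F₂) (ξ : l2F₂) (h : F₂) :
    (L g * R g') ξ h = ξ (g⁻¹ * h * g') := rfl

lemma norm_L_mul_R_apply (g g' : F₂) (ξ : l2F₂) : ‖(L g * R g') ξ‖ = ‖ξ‖ :=
  (lpCompEquiv _).norm_map ((lpCompEquiv _) ξ) |>.trans ((lpCompEquiv _).norm_map ξ)

open FreeGroup in
lemma norm_sq_le_normSqOn_startingWith {i j : Fin 2} (hij : i ≠ j) (ξ : l2F₂) :
    ‖ξ‖ ^ 2 ≤ normSqOn ξ (startingWith (i, true)) + 3 / 2 * normSqOn ξ (startingWith (i, false))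
      + 3 * ‖(L (of i) * R (of j)) ξ - ξ‖ ^ 2 := by
  let e : F₂ ≃ F₂ := (Equiv.mulLeft (of i)⁻¹).trans (Equiv.mulRight (of j))
  -- `(of i)⁻¹ = mk [(i, false)]` and `of j = mk [(j, true)]` hold definitionally.
  exact norm_sq_le_normSqOn_add_of_mapsTo ξ e (fun h => L_mul_R_apply _ _ ξ h) fun h hh =>
    mk_singleton_mul_mul_mk_singleton_mem_startingWith (x := (i, false)) (y := (j, true)) hij hh

lemma norm_sq_le_six_mul (ξ : l2F₂) :
    ‖ξ‖ ^ 2 ≤ 6 * (‖(L g₁ * R g₂) ξ - ξ‖ ^ 2 + ‖(L g₂ * R g₁) ξ - ξ‖ ^ 2) := by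
  have h₁ := norm_sq_le_normSqOn_startingWith (i := 0) (j := 1) (by decide) ξ
  have h₂ := norm_sq_le_normSqOn_startingWith (i := 1) (j := 0) (by decide) ξ
  have htotal := sum_normSqOn_le ξ Finset.univ
    (FreeGroup.pairwise_disjoint_startingWith.set_pairwise _)
  simp only [Fintype.sum_prod_type, Fin.sum_univ_two, Fintype.sum_bool] at htotal
  unfold g₁ g₂
  linarith [normSqOn_nonneg ξ (FreeGroup.startingWith (0, true)),
    normSqOn_nonneg ξ (FreeGroup.startingWith (1, true))]

/-- The quantitative content of Example 2.6 of Magajna, "Pointwise approximation by elementary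
complete contractions": the operator `T₂ = 1 + L_{g₁}R_{g₂} + L_{g₁⁻¹}R_{g₂⁻¹} + L_{g₂}R_{g₁}`
on `ℓ²(F₂)` has operator norm at most `4 - 1/784`. -/
theorem norm_one_add_mixed_translations_le :
    ‖(1 : l2F₂ →L[ℂ] l2F₂) + L g₁ * R g₂ + L g₁⁻¹ * R g₂⁻¹ + L g₂ * R g₁‖ ≤ 4 - 1 / 784 := by
  refine ContinuousLinearMap.opNorm_le_bound _ (by norm_num) fun ξ => ?_
  have hcoercive := norm_sq_le_six_mul ξ
  have hfour := norm_add_add_add_sq_add_norm_sub_sq_add_norm_sub_sq_le (𝕜 := ℂ)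
    ξ ((L g₁ * R g₂) ξ) ((L g₁⁻¹ * R g₂⁻¹) ξ) ((L g₂ * R g₁) ξ)
  simp only [norm_L_mul_R_apply] at hfour
  simp only [add_apply, one_apply_eq_self]
  refine le_of_pow_le_pow_left₀ two_ne_zero (by positivity) ?_
  nlinarith [sq_nonneg ‖ξ‖]

end
end

section
/- Let F₂ be the free group on two generators g₁, g₂, and let S ⊆ F₂ be the set consisting of the identity element together with all elements whose reduced word ends in a nonzero power of g₁ (i.e. whose last letter is g₁ or g₁⁻¹). Then S ∪ g₂⁻¹Sg₁ = F₂, where g₂⁻¹Sg₁ = {g₂⁻¹ s g₁ : s ∈ S}. -/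
/-- The set `S ⊆ F₂` consisting of the identity element together with all elements whose
reduced word ends in a nonzero power of `g₁`, i.e. whose last letter is `g₁` or `g₁⁻¹`. -/
def S : Set F₂ := {w | w = 1 ∨ ∃ b : Bool, w.toWord.getLast? = some ((0 : Fin 2), b)}

lemma of_mk {α} (a : α) : FreeGroup.of a = FreeGroup.mk [(a, true)] := rfl

/-- Prepending a letter to a reduced word with known last letter: either the last letter
survives, or the whole word was a single letter cancelling with `x`. -/
lemma lastA {α} [DecidableEq α] (L : List (α × Bool)) (hred : FreeGroup.reduce L = L)
    (x c : α × Bool) (h : L.getLast? = some c) :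
    (FreeGroup.reduce (x :: L)).getLast? = some c ∨ L = [(x.1, !x.2)] := by
  rw [FreeGroup.reduce.cons, hred]
  cases L with
  | nil => simp at h
  | cons y ys =>
    dsimp only
    by_cases hc : x.1 = y.1 ∧ x.2 = !y.2
    · rw [if_pos hc]
      cases ys with
      | nil =>
        right
        simp only [List.getLast?_singleton, Option.some.injEq] at h
        subst h
        obtain ⟨h1, h2⟩ := hc
        obtain ⟨ya, yb⟩ := y
        simp_all
      | cons z zs =>
        left
        rw [List.getLast?_cons_cons] at h
        exact h
    · rw [if_neg hc]
      left
      rw [List.getLast?_cons_cons]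
      exact h

/-- Prepending a non-cancelling letter to a reduced word. -/
lemma headA {α} [DecidableEq α] (L : List (α × Bool)) (hred : FreeGroup.reduce L = L)
    (x y : α × Bool) (h : L.head? = some y) (hxy : x.1 ≠ y.1) :
    FreeGroup.reduce (x :: L) = x :: L := by
  rw [FreeGroup.reduce.cons, hred]
  cases L with
  | nil => simp at h
  | cons z zs =>
    dsimp only
    simp only [List.head?_cons, Option.some.injEq] at h
    subst h
    rw [if_neg (by tauto)]

lemma invRev_getLast? {α} (L : List (α × Bool)) :
    (FreeGroup.invRev L).getLast? = (L.head?).map (fun g => (g.1, !g.2)) := by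
  simp [FreeGroup.invRev, List.getLast?_reverse, List.head?_map]

lemma invRev_head? {α} (L : List (α × Bool)) :
    (FreeGroup.invRev L).head? = (L.getLast?).map (fun g => (g.1, !g.2)) := by
  simp [FreeGroup.invRev, List.head?_reverse, List.getLast?_map]

/-- The first paradoxical-decomposition-type property of `S` used in Example 2.6 of Magajna,
"Pointwise approximation by elementary complete contractions": `S ∪ g₂⁻¹ S g₁ = F₂`. -/
theorem S_union_conj_eq_univ :
    S ∪ (fun s => g₂⁻¹ * s * g₁) '' S = Set.univ := by
  ext w
  simp only [Set.mem_univ, iff_true, Set.mem_union, Set.mem_image]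
  by_cases hw : w ∈ S
  · exact Or.inl hw
  right
  refine ⟨g₂ * w * g₁⁻¹, ?_, by group⟩
  simp only [S, Set.mem_setOf_eq, not_or, not_exists] at hw
  obtain ⟨hw1, hwl⟩ := hw
  set L := w.toWord with hLdef
  have hL : L ≠ [] := fun h => hw1 (FreeGroup.toWord_eq_nil_iff.mp h)
  obtain ⟨c, hc⟩ := Option.isSome_iff_exists.mp (List.getLast?_isSome.mpr hL)
  have hc1 : c.1 = 1 := by
    have hne : c.1 ≠ 0 := fun h0 => hwl c.2 (by rw [hc, ← h0])
    have h2 := c.1.isLt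
    have h3 : c.1.val ≠ 0 := fun h => hne (Fin.ext h)
    exact Fin.ext (by omega)
  have hcc : c = ((1 : Fin 2), c.2) := by rw [← hc1]
  have hred : FreeGroup.reduce L = L := FreeGroup.reduce_toWord w
  -- the word of g₂ * w
  have hmul : (g₂ * w).toWord = FreeGroup.reduce (((1 : Fin 2), true) :: L) := by
    rw [g₂, of_mk, ← FreeGroup.mk_toWord (x := w), ← hLdef, FreeGroup.mul_mk,
      FreeGroup.toWord_mk]
    rfl
  rcases lastA L hred ((1 : Fin 2), true) c hc with hlast | hsingle
  · -- main case: last letter of g₂ * w is still (1, c.2)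
    have hMlast : (g₂ * w).toWord.getLast? = some ((1 : Fin 2), c.2) := by
      rw [hmul, ← hcc]; exact hlast
    set M := (g₂ * w).toWord with hMdef
    have hMred : FreeGroup.reduce M = M := FreeGroup.reduce_toWord _
    -- word of (g₂ * w)⁻¹
    have hinv : ((g₂ * w)⁻¹).toWord = FreeGroup.invRev M := FreeGroup.toWord_inv _
    have hinvhead : (FreeGroup.invRev M).head? = some ((1 : Fin 2), !c.2) := by
      rw [invRev_head?, hMlast]; rfl
    have hinvred : FreeGroup.reduce (FreeGroup.invRev M) = FreeGroup.invRev M := by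
      rw [← hinv]; exact FreeGroup.reduce_toWord _
    -- word of g₁ * (g₂ * w)⁻¹ = (g₂ * w * g₁⁻¹)⁻¹
    have hkey : ((g₂ * w * g₁⁻¹)⁻¹).toWord
        = ((0 : Fin 2), true) :: FreeGroup.invRev M := by
      have : (g₂ * w * g₁⁻¹)⁻¹ = g₁ * (g₂ * w)⁻¹ := by group
      rw [this, g₁, of_mk, ← FreeGroup.mk_toWord (x := (g₂ * w)⁻¹), hinv,
        FreeGroup.mul_mk, FreeGroup.toWord_mk]
      exact headA _ hinvred ((0 : Fin 2), true) ((1 : Fin 2), !c.2) hinvhead (show ((0 : Fin 2)) ≠ 1 by decide)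
    right
    refine ⟨false, ?_⟩
    have : (g₂ * w * g₁⁻¹).toWord = FreeGroup.invRev (((g₂ * w * g₁⁻¹)⁻¹).toWord) := by
      conv_lhs => rw [show g₂ * w * g₁⁻¹ = ((g₂ * w * g₁⁻¹)⁻¹)⁻¹ by group]
      exact FreeGroup.toWord_inv _
    rw [this, hkey, invRev_getLast?]
    rfl
  · -- degenerate case: w = g₂⁻¹
    have hwval : w = g₂⁻¹ := by
      rw [← FreeGroup.mk_toWord (x := w), ← hLdef, hsingle, g₂, of_mk, FreeGroup.inv_mk]
      rfl
    right
    refine ⟨false, ?_⟩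
    rw [hwval]
    have : g₂ * g₂⁻¹ * g₁⁻¹ = g₁⁻¹ := by group
    rw [this, FreeGroup.toWord_inv, g₁, of_mk, FreeGroup.toWord_mk]
    rfl
end

section
/- Let F₂ be the free group on two generators g₁, g₂, and let S ⊆ F₂ be the set consisting of the identity element together with all elements whose reduced word ends in a nonzero power of g₁ (i.e. whose last letter is g₁ or g₁⁻¹). Then the three sets S, g₁⁻¹Sg₂ = {g₁⁻¹ s g₂ : s ∈ S}, and g₁Sg₂⁻¹ = {g₁ s g₂⁻¹ : s ∈ S} are pairwise disjoint. -/
namespace SConjAux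

open FreeGroup List

variable {α : Type*} [DecidableEq α]

lemma tail_reduced {x : α × Bool} {L : List (α × Bool)}
    (h : reduce (x :: L) = x :: L) : reduce L = L := by
  rw [reduce.cons] at h
  rcases hr : reduce L with _ | ⟨hd, tl⟩
  · rw [hr] at h
    simp only at h
    have : L = [] := by simpa using congrArg List.tail h
    simp [this]
  · rw [hr] at h
    simp only at h
    split_ifs at h with hc
    · have h1 : (reduce L).length ≤ L.length := (Red.length_le reduce.red)
      rw [hr] at h1
      have := congrArg List.length h
      simp at this h1
      omega
    · have := congrArg List.tail h
      simp at this
      exact this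

lemma reduce_append_single {c : α × Bool} :
    ∀ {L : List (α × Bool)}, reduce L = L → L.getLast? ≠ some (c.1, !c.2) →
      reduce (L ++ [c]) = L ++ [c]
  | [], _, _ => reduce_singleton c
  | [x], _, hl => by
    have hx : x ≠ (c.1, !c.2) := by simpa using hl
    rw [List.singleton_append, reduce.cons, reduce_singleton]
    dsimp only
    rw [if_neg]
    rintro ⟨h1, h2⟩
    exact hx (Prod.ext h1 h2)
  | x :: hd :: tl, hred, hl => by
    have htl : reduce (hd :: tl) = hd :: tl := tail_reduced hred
    have ih : reduce ((hd :: tl) ++ [c]) = (hd :: tl) ++ [c] :=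
      reduce_append_single htl (by simpa using hl)
    have hnc : ¬(x.1 = hd.1 ∧ x.2 = !hd.2) := by
      intro hc
      rw [reduce.cons, htl] at hred
      simp only [hc, if_true] at hred
      have := congrArg List.length hred
      simp at this
      omega
    show reduce (x :: ((hd :: tl) ++ [c])) = _
    rw [reduce.cons, ih]
    simp only [List.cons_append]
    rw [if_neg hnc]

lemma left_mul_getLast {b' : Bool} {a : α} {a' : α} {tb : Bool} {w : FreeGroup α}
    (hne : a ≠ a')
    (h : w.toWord.getLast? = some (a', tb)) :
    ((FreeGroup.mk [(a, b')]) * w).toWord.getLast? = some (a', tb) := by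
  conv_lhs => rw [← FreeGroup.mk_toWord (x := w)]
  rw [FreeGroup.mul_mk, FreeGroup.toWord_mk]
  rcases hM : w.toWord with _ | ⟨m, tl⟩
  · simp [hM] at h
  · rw [hM] at h
    have hred : reduce (m :: tl) = m :: tl := by rw [← hM]; exact FreeGroup.reduce_toWord w
    simp only [List.singleton_append, reduce.cons, hred]
    split_ifs with hc
    · rcases tl with _ | ⟨y, tl'⟩
      · simp at h
        exact absurd (hc.1.trans (congrArg Prod.fst h)) hne
      · simpa using h
    · simpa using h

lemma of_eq_mk (a : α) : FreeGroup.of a = FreeGroup.mk [(a, true)] := rfl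

lemma inv_of_eq_mk (a : α) : (FreeGroup.of a)⁻¹ = FreeGroup.mk [(a, false)] := by
  rw [of_eq_mk, FreeGroup.inv_mk]; rfl

lemma S_last_ne {s : F₂} (hs : s ∈ S) (b : Bool) :
    s.toWord.getLast? ≠ some ((1 : Fin 2), b) := by
  rcases hs with rfl | ⟨b', hb'⟩
  · simp [FreeGroup.toWord_one]
  · rw [hb']
    simp

lemma mul_right_toWord {s : F₂} (hs : s ∈ S) (c : Bool) :
    (s * FreeGroup.mk [((1 : Fin 2), c)]).toWord = s.toWord ++ [((1 : Fin 2), c)] := by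
  conv_lhs => rw [← FreeGroup.mk_toWord (x := s)]
  rw [FreeGroup.mul_mk, FreeGroup.toWord_mk]
  exact reduce_append_single (FreeGroup.reduce_toWord s) (S_last_ne hs _)

lemma A_last {s : F₂} (hs : s ∈ S) :
    (g₁⁻¹ * s * g₂).toWord.getLast? = some ((1 : Fin 2), true) := by
  have h1 : (s * g₂).toWord.getLast? = some ((1 : Fin 2), true) := by
    rw [g₂, of_eq_mk, mul_right_toWord hs]; simp
  rw [mul_assoc, g₁, inv_of_eq_mk]
  exact left_mul_getLast (by decide) h1

lemma B_last {s : F₂} (hs : s ∈ S) :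
    (g₁ * s * g₂⁻¹).toWord.getLast? = some ((1 : Fin 2), false) := by
  have h1 : (s * g₂⁻¹).toWord.getLast? = some ((1 : Fin 2), false) := by
    rw [g₂, inv_of_eq_mk, mul_right_toWord hs]; simp
  rw [mul_assoc, g₁, of_eq_mk]
  exact left_mul_getLast (by decide) h1

end SConjAux

open SConjAux in
/-- The second paradoxical-decomposition-type property of `S` used in Example 2.6 of Magajna,
"Pointwise approximation by elementary complete contractions": the sets `S`, `g₁⁻¹ S g₂` and
`g₁ S g₂⁻¹` are pairwise disjoint. -/
theorem S_conj_pairwise_disjoint :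
    Disjoint S ((fun s => g₁⁻¹ * s * g₂) '' S) ∧
    Disjoint S ((fun s => g₁ * s * g₂⁻¹) '' S) ∧
    Disjoint ((fun s => g₁⁻¹ * s * g₂) '' S) ((fun s => g₁ * s * g₂⁻¹) '' S) := by
  refine ⟨Set.disjoint_left.2 ?_, Set.disjoint_left.2 ?_, Set.disjoint_left.2 ?_⟩
  · rintro w hw ⟨s, hs, hws⟩
    have hA := A_last hs
    rw [show (fun s => g₁⁻¹ * s * g₂) s = g₁⁻¹ * s * g₂ from rfl] at hws
    rw [hws] at hA
    rcases hw with rfl | ⟨b, hb⟩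
    · rw [FreeGroup.toWord_one] at hA; simp at hA
    · rw [hb] at hA; simp at hA
  · rintro w hw ⟨s, hs, hws⟩
    have hB := B_last hs
    rw [show (fun s => g₁ * s * g₂⁻¹) s = g₁ * s * g₂⁻¹ from rfl] at hws
    rw [hws] at hB
    rcases hw with rfl | ⟨b, hb⟩
    · rw [FreeGroup.toWord_one] at hB; simp at hB
    · rw [hb] at hB; simp at hB
  · rintro w ⟨s, hs, hws⟩ ⟨t, ht, hwt⟩
    have hA := A_last hs
    have hB := B_last ht
    rw [show (fun s => g₁⁻¹ * s * g₂) s = g₁⁻¹ * s * g₂ from rfl] at hws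
    rw [show (fun s => g₁ * s * g₂⁻¹) t = g₁ * t * g₂⁻¹ from rfl] at hwt
    rw [hws] at hA
    rw [hwt] at hB
    rw [hA] at hB
    simp at hB
end

section
/- Let F₂ be the free group on two generators g₁, g₂, let ξ ∈ ℓ²(F₂) with ∑_{g∈F₂} |ξ(g)|² = 1, and let ε > 0. For T ⊆ F₂ write μ(T) = ∑_{g∈T} |ξ(g)|². Let S ⊆ F₂ be the set consisting of the identity together with all elements whose reduced word ends in a nonzero power of g₁. If ∑_{g∈F₂} |ξ(g₁⁻¹ g g₂) − ξ(g)|² < ε², ∑_{g∈F₂} |ξ(g₁ g g₂⁻¹) − ξ(g)|² < ε², and ∑_{g∈F₂} |ξ(g₂⁻¹ g g₁) − ξ(g)|² < ε², then 1/2 − ε < μ(S) < (1 + 4ε)/3. -/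
open Function Set

section SquareSummable

variable {ι E : Type*} [NormedAddCommGroup E]

theorem memℓp_two_iff {f : ι → E} : Memℓp f 2 ↔ Summable fun i => ‖f i‖ ^ 2 := by
  simpa using memℓp_gen_iff (E := fun _ : ι => E) (p := 2) (f := f) (by norm_num)

theorem lp.norm_two_eq_sqrt_tsum (f : lp (fun _ : ι => E) 2) : ‖f‖ = √(∑' i, ‖f i‖ ^ 2) := by
  rw [← Real.sqrt_sq (norm_nonneg f)]
  simpa using congrArg Real.sqrt (lp.norm_rpow_eq_tsum (p := 2) (by norm_num) f)

theorem abs_sqrt_tsum_norm_sq_sub_le {f g : ι → E} (hf : Summable fun i => ‖f i‖ ^ 2)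
    (hg : Summable fun i => ‖g i‖ ^ 2) :
    |√(∑' i, ‖f i‖ ^ 2) - √(∑' i, ‖g i‖ ^ 2)| ≤ √(∑' i, ‖f i - g i‖ ^ 2) := by
  let F : lp (fun _ : ι => E) 2 := ⟨f, memℓp_two_iff.2 hf⟩
  let G : lp (fun _ : ι => E) 2 := ⟨g, memℓp_two_iff.2 hg⟩
  simpa only [lp.norm_two_eq_sqrt_tsum, lp.coeFn_sub, Pi.sub_apply] using abs_norm_sub_norm_le F G

theorem abs_tsum_norm_sq_sub_le {f g : ι → E} (hf : Summable fun i => ‖f i‖ ^ 2)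
    (hg : Summable fun i => ‖g i‖ ^ 2) (hf1 : ∑' i, ‖f i‖ ^ 2 ≤ 1) (hg1 : ∑' i, ‖g i‖ ^ 2 ≤ 1) :
    |∑' i, ‖f i‖ ^ 2 - ∑' i, ‖g i‖ ^ 2| ≤ 2 * √(∑' i, ‖f i - g i‖ ^ 2) := by
  set a := √(∑' i, ‖f i‖ ^ 2)
  set b := √(∑' i, ‖g i‖ ^ 2)
  have ha : a ^ 2 = ∑' i, ‖f i‖ ^ 2 := Real.sq_sqrt (tsum_nonneg fun i => sq_nonneg _)
  have hb : b ^ 2 = ∑' i, ‖g i‖ ^ 2 := Real.sq_sqrt (tsum_nonneg fun i => sq_nonneg _)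
  have hsum : |a + b| ≤ 2 := by
    rw [abs_of_nonneg (by positivity)]
    linarith [Real.sqrt_le_one.2 hf1, Real.sqrt_le_one.2 hg1]
  calc |∑' i, ‖f i‖ ^ 2 - ∑' i, ‖g i‖ ^ 2| = |a - b| * |a + b| := by
        rw [← ha, ← hb, ← abs_mul, sq_sub_sq, mul_comm]
    _ ≤ √(∑' i, ‖f i - g i‖ ^ 2) * 2 :=
        mul_le_mul (abs_sqrt_tsum_norm_sq_sub_le hf hg) hsum (abs_nonneg _) (Real.sqrt_nonneg _)
    _ = 2 * √(∑' i, ‖f i - g i‖ ^ 2) := mul_comm _ _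

theorem Summable.norm_sq_sub {f g : ι → E} (hf : Summable fun i => ‖f i‖ ^ 2)
    (hg : Summable fun i => ‖g i‖ ^ 2) : Summable fun i => ‖f i - g i‖ ^ 2 :=
  memℓp_two_iff.1 ((memℓp_two_iff.2 hf).sub (memℓp_two_iff.2 hg))

/-- The paper's `μ(T)`. -/
noncomputable def sqMass (ξ : ι → E) (T : Set ι) : ℝ := ∑' i : T, ‖ξ i‖ ^ 2

variable {ξ : ι → E} {s t : Set ι}

theorem sqMass_le_tsum (hξ : Summable fun i => ‖ξ i‖ ^ 2) (T : Set ι) :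
    sqMass ξ T ≤ ∑' i, ‖ξ i‖ ^ 2 :=
  hξ.tsum_subtype_le _ T fun _ => sq_nonneg _

theorem sqMass_univ (ξ : ι → E) : sqMass ξ univ = ∑' i, ‖ξ i‖ ^ 2 :=
  tsum_univ fun i => ‖ξ i‖ ^ 2

theorem sqMass_mono (hξ : Summable fun i => ‖ξ i‖ ^ 2) (h : s ⊆ t) : sqMass ξ s ≤ sqMass ξ t :=
  tsum_comp_le_tsum_of_inj (hξ.subtype t) (fun _ => sq_nonneg _) (inclusion_injective h)

theorem sqMass_union_of_disjoint (hξ : Summable fun i => ‖ξ i‖ ^ 2) (hd : Disjoint s t) :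
    sqMass ξ (s ∪ t) = sqMass ξ s + sqMass ξ t :=
  (hξ.subtype s).tsum_union_disjoint hd (hξ.subtype t)

theorem sqMass_union_le (hξ : Summable fun i => ‖ξ i‖ ^ 2) :
    sqMass ξ (s ∪ t) ≤ sqMass ξ s + sqMass ξ t := by
  rw [← union_sdiff_self, sqMass_union_of_disjoint hξ disjoint_sdiff_right]
  exact add_le_add_right (sqMass_mono hξ sdiff_subset) _

theorem sqMass_image {α : ι → ι} {T : Set ι} (hα : InjOn α T) :
    sqMass ξ (α '' T) = ∑' i : T, ‖ξ (α i)‖ ^ 2 :=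
  tsum_image (fun i => ‖ξ i‖ ^ 2) hα

theorem abs_sqMass_image_sub_le (hξ : Summable fun i => ‖ξ i‖ ^ 2) (hξ1 : ∑' i, ‖ξ i‖ ^ 2 ≤ 1)
    {α : ι → ι} (hα : Injective α) (T : Set ι) :
    |sqMass ξ (α '' T) - sqMass ξ T| ≤ 2 * √(∑' i, ‖ξ (α i) - ξ i‖ ^ 2) := by
  have hξα : Summable fun i => ‖ξ (α i)‖ ^ 2 := hξ.comp_injective hα
  have h1 : ∀ T', sqMass ξ T' ≤ 1 := fun T' => (sqMass_le_tsum hξ T').trans hξ1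
  have key := abs_tsum_norm_sq_sub_le (f := fun i : T => ξ (α i)) (g := fun i : T => ξ i)
    (hξα.subtype T) (hξ.subtype T) ((sqMass_image hα.injOn).symm.trans_le (h1 _)) (h1 T)
  rw [sqMass_image hα.injOn]
  refine key.trans ?_
  gcongr
  exact (hξα.norm_sq_sub hξ).tsum_subtype_le _ T fun _ => sq_nonneg _

end SquareSummable

namespace FreeGroup

variable {α : Type*} [DecidableEq α]

theorem toWord_mul_mk_singleton_s12 {w : FreeGroup α} {y : α × Bool}
    (h : ∀ z ∈ w.toWord.getLast?, z.1 = y.1 → z.2 = y.2) :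
    (w * mk [y]).toWord = w.toWord ++ [y] := by
  rw [toWord_mul, toWord_mk, reduce_singleton]
  exact IsReduced.reduce_eq <| List.isChain_append.2
    ⟨isReduced_toWord, List.isChain_singleton y, fun z hz _ hy => by cases hy; exact h z hz⟩

theorem getLast?_toWord_mk_singleton_mul {x y : α × Bool} {w : FreeGroup α}
    (hw : w.toWord.getLast? = some y) (hxy : x.1 ≠ y.1) :
    (mk [x] * w).toWord.getLast? = some y := by
  rw [toWord_mul, toWord_mk, reduce_singleton, List.singleton_append, reduce.cons, reduce_toWord]
  rcases hL : w.toWord with _ | ⟨hd, tl⟩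
  · simp [hL] at hw
  rw [hL] at hw
  dsimp only
  split_ifs with hcancel
  -- `x` cancels `hd`, which is not the last letter because its generator is `x.1 ≠ y.1`
  · rcases tl with _ | ⟨a, l⟩
    · simp only [List.getLast?_singleton, Option.some.injEq] at hw
      exact absurd (hcancel.1.trans (congrArg Prod.fst hw)) hxy
    · rwa [List.getLast?_cons_cons] at hw
  · rw [List.getLast?_cons_cons, hw]

theorem getLast?_toWord_mk_mul_mul_mk {x y : α × Bool} (hxy : x.1 ≠ y.1) {w : FreeGroup α}
    (hw : ∀ z ∈ w.toWord.getLast?, z.1 = y.1 → z.2 = y.2) :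
    (mk [x] * w * mk [y]).toWord.getLast? = some y := by
  rw [mul_assoc]
  exact getLast?_toWord_mk_singleton_mul
    (by rw [toWord_mul_mk_singleton_s12 hw, List.getLast?_concat]) hxy

end FreeGroup

open FreeGroup

theorem mem_S_iff {w : F₂} : w ∈ S ↔ ∀ z ∈ w.toWord.getLast?, z.1 = 0 := by
  constructor
  · rintro (rfl | ⟨b, hb⟩) z hz
    · simp at hz
    · rw [hb, Option.mem_some_iff] at hz
      rw [← hz]
  · intro h
    rcases hL : w.toWord.getLast? with _ | z
    · exact Or.inl (toWord_eq_nil_iff.1 (List.getLast?_eq_none_iff.1 hL))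
    · exact Or.inr ⟨z.2, by rw [hL, ← h z hL]⟩

theorem getLast?_toWord_mk_mul_mul_mk_of_mem_S {s : F₂} (hs : s ∈ S) (c b : Bool) :
    (mk [(0, c)] * s * mk [(1, b)]).toWord.getLast? = some (1, b) :=
  getLast?_toWord_mk_mul_mul_mk zero_ne_one fun z hz hz1 =>
    absurd (hz1.symm.trans (mem_S_iff.1 hs z hz)) one_ne_zero

theorem notMem_S_of_getLast?_toWord {w : F₂} {b : Bool} (h : w.toWord.getLast? = some (1, b)) :
    w ∉ S :=
  fun hw => one_ne_zero (mem_S_iff.1 hw _ h)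

theorem S_union_image_eq_univ : S ∪ (fun g => g₂⁻¹ * g * g₁) '' S = univ := by
  refine eq_univ_of_forall fun g => or_iff_not_imp_left.2 fun hg => ⟨g₂ * g * g₁⁻¹, ?_, by group⟩
  obtain ⟨z, hz, hz0⟩ : ∃ z ∈ g.toWord.getLast?, z.1 ≠ 0 := by
    simpa only [mem_S_iff, not_forall, exists_prop] using hg
  refine Or.inr ⟨false, getLast?_toWord_mk_mul_mul_mk (x := (1, true)) one_ne_zero ?_⟩
  intro z' hz' hz'0
  exact absurd (Option.mem_unique hz hz' ▸ hz'0) hz0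

theorem disjoint_S_image_g₁_inv_g₂ : Disjoint S ((fun g => g₁⁻¹ * g * g₂) '' S) := by
  rw [disjoint_right]
  rintro _ ⟨s, hs, rfl⟩
  exact notMem_S_of_getLast?_toWord (getLast?_toWord_mk_mul_mul_mk_of_mem_S hs false true)

theorem disjoint_S_image_g₁_g₂_inv : Disjoint S ((fun g => g₁ * g * g₂⁻¹) '' S) := by
  rw [disjoint_right]
  rintro _ ⟨s, hs, rfl⟩
  exact notMem_S_of_getLast?_toWord (getLast?_toWord_mk_mul_mul_mk_of_mem_S hs true false)

theorem disjoint_image_g₁_inv_g₂_image_g₁_g₂_inv :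
    Disjoint ((fun g => g₁⁻¹ * g * g₂) '' S) ((fun g => g₁ * g * g₂⁻¹) '' S) := by
  rw [disjoint_left]
  rintro _ ⟨s, hs, rfl⟩ ⟨t, ht, hts⟩
  have hs' : (g₁⁻¹ * s * g₂).toWord.getLast? = some (1, true) :=
    getLast?_toWord_mk_mul_mul_mk_of_mem_S hs false true
  have ht' : (g₁ * t * g₂⁻¹).toWord.getLast? = some (1, false) :=
    getLast?_toWord_mk_mul_mul_mk_of_mem_S ht true false
  rw [show g₁ * t * g₂⁻¹ = g₁⁻¹ * s * g₂ from hts, hs'] at ht'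
  simp at ht'

/-- The estimate on `μ(S)` derived from the almost-invariance conditions (2.10) in Example 2.6
of Magajna, "Pointwise approximation by elementary complete contractions": if `ξ` is a unit
vector of `ℓ²(F₂)` which is `ε`-almost invariant for the three twisted translations, then
`1/2 - ε < μ(S) < (1 + 4ε)/3`, where `μ(T) = ∑_{g ∈ T} |ξ(g)|²`. -/
theorem mu_S_bounds_of_almost_invariance
    (ξ : F₂ → ℂ) (hsum : Summable fun g => ‖ξ g‖ ^ 2) (hξ : ∑' g, ‖ξ g‖ ^ 2 = 1)
    (ε : ℝ) (hε : 0 < ε)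
    (h1 : ∑' g : F₂, ‖ξ (g₁⁻¹ * g * g₂) - ξ g‖ ^ 2 < ε ^ 2)
    (h2 : ∑' g : F₂, ‖ξ (g₁ * g * g₂⁻¹) - ξ g‖ ^ 2 < ε ^ 2)
    (h3 : ∑' g : F₂, ‖ξ (g₂⁻¹ * g * g₁) - ξ g‖ ^ 2 < ε ^ 2) :
    1 / 2 - ε < (∑' g : S, ‖ξ g‖ ^ 2) ∧ (∑' g : S, ‖ξ g‖ ^ 2) < (1 + 4 * ε) / 3 := by
  have hclose {a b : F₂} (h : ∑' g, ‖ξ (a * g * b) - ξ g‖ ^ 2 < ε ^ 2) :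
      |sqMass ξ ((fun g => a * g * b) '' S) - sqMass ξ S| < 2 * ε :=
    (abs_sqMass_image_sub_le hsum hξ.le ((mul_left_injective b).comp (mul_right_injective a))
      S).trans_lt (by gcongr; exact (Real.sqrt_lt' hε).2 h)
  have hlower : 1 ≤ sqMass ξ S + sqMass ξ ((fun g => g₂⁻¹ * g * g₁) '' S) := by
    rw [← hξ, ← sqMass_univ, ← S_union_image_eq_univ]
    exact sqMass_union_le hsum
  have hupper : sqMass ξ S + sqMass ξ ((fun g => g₁⁻¹ * g * g₂) '' S)
      + sqMass ξ ((fun g => g₁ * g * g₂⁻¹) '' S) ≤ 1 := by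
    rw [← sqMass_union_of_disjoint hsum disjoint_S_image_g₁_inv_g₂,
      ← sqMass_union_of_disjoint hsum (disjoint_union_left.2
        ⟨disjoint_S_image_g₁_g₂_inv, disjoint_image_g₁_inv_g₂_image_g₁_g₂_inv⟩), ← hξ]
    exact sqMass_le_tsum hsum _
  obtain ⟨hclose₁, -⟩ := abs_lt.1 (hclose h1)
  obtain ⟨hclose₂, -⟩ := abs_lt.1 (hclose h2)
  obtain ⟨-, hclose₃⟩ := abs_lt.1 (hclose h3)
  change 1 / 2 - ε < sqMass ξ S ∧ sqMass ξ S < (1 + 4 * ε) / 3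
  constructor <;> linarith
end

section
/- Let F₂ be the free group on two generators g₁, g₂. For every ξ ∈ ℓ²(F₂) with ∑_{g∈F₂} |ξ(g)|² = 1, at least one of the three quantities ∑_{g∈F₂} |ξ(g₁⁻¹ g g₂) − ξ(g)|², ∑_{g∈F₂} |ξ(g₁ g g₂⁻¹) − ξ(g)|², ∑_{g∈F₂} |ξ(g₂⁻¹ g g₁) − ξ(g)|² is greater than or equal to 1/196. -/
namespace MagajnaAux

open FreeGroup

/- ## Combinatorial part -/

/-- If `L` is reduced, ends with `x`, and `a` has a different generator than `x`,
then `reduce (a :: L)` still ends with `x`. -/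
lemma getLast?_reduce_cons {L : List (Fin 2 × Bool)} {x a : Fin 2 × Bool}
    (hred : reduce L = L) (hx : L.getLast? = some x) (ha : a.1 ≠ x.1) :
    (reduce (a :: L)).getLast? = some x := by
  rcases L with _ | ⟨hd, tl⟩
  · simp at hx
  · rw [reduce.cons, hred]
    by_cases hc : a.1 = hd.1 ∧ a.2 = !hd.2
    · simp only [hc, and_self, if_true]
      rcases tl with _ | ⟨y, ys⟩
      · simp at hx
        exact absurd (hx ▸ hc.1) ha
      · rw [List.getLast?_cons_cons] at hx
        simpa using hx
    · simp only [hc, if_false]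
      rw [List.getLast?_cons_cons]
      exact hx

/-- If `L` is reduced and does not end with the inverse letter of `x`, then
`L ++ [x]` is reduced. -/
lemma reduce_append_singleton {L : List (Fin 2 × Bool)} {x : Fin 2 × Bool}
    (hred : reduce L = L) (hx : L.getLast? ≠ some (x.1, !x.2)) :
    reduce (L ++ [x]) = L ++ [x] := by
  have hinvred : reduce (invRev L) = invRev L := by
    rw [reduce_invRev, hred]
  apply invRev_injective
  rw [← reduce_invRev]
  have hIR : invRev (L ++ [x]) = (x.1, !x.2) :: invRev L := by
    simp [invRev]
  rw [hIR, reduce.cons, hinvred]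
  rcases hL : invRev L with _ | ⟨hd, tl⟩
  · rfl
  · by_cases hc : x.1 = hd.1 ∧ (!x.2) = (!hd.2)
    · exfalso
      apply hx
      have hmem : L.getLast? = some (hd.1, !hd.2) := by
        have : ((L.map fun p => (p.1, !p.2)).reverse : List (Fin 2 × Bool)) = hd :: tl := hL
        have h2 : (L.map fun p => (p.1, !p.2)).getLast? = some hd := by
          rw [← List.head?_reverse, this]; rfl
        rw [List.getLast?_map] at h2
        rcases hlast : L.getLast? with _ | y
        · rw [hlast] at h2; simp at h2
        · rw [hlast] at h2
          simp only [Option.map_some] at h2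
          have hy : (y.1, !y.2) = hd := by injection h2
          rw [← hy]
          simp
      rw [hmem]
      have hb : x.2 = hd.2 := by simpa using hc.2
      rw [hc.1, hb]
    · simp only [hc, if_false]

/-- The version for elements of `F₂`: appending a letter which does not cancel. -/
lemma toWord_mul_letter (w : F₂) (x : Fin 2 × Bool)
    (h : w.toWord.getLast? ≠ some (x.1, !x.2)) :
    (w * FreeGroup.mk [x]).toWord = w.toWord ++ [x] := by
  conv_lhs => rw [← FreeGroup.mk_toWord (x := w)]
  rw [FreeGroup.mul_mk, FreeGroup.toWord_mk]
  exact reduce_append_singleton (FreeGroup.reduce_toWord w) h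

/-- Prepending a letter with a different generator than the last letter keeps the
last letter. -/
lemma getLast?_toWord_letter_mul (w : F₂) (a x : Fin 2 × Bool)
    (hx : w.toWord.getLast? = some x) (ha : a.1 ≠ x.1) :
    (FreeGroup.mk [a] * w).toWord.getLast? = some x := by
  conv_lhs => rw [← FreeGroup.mk_toWord (x := w)]
  rw [FreeGroup.mul_mk, FreeGroup.toWord_mk]
  have : ([a] ++ w.toWord : List (Fin 2 × Bool)) = a :: w.toWord := rfl
  rw [this]
  exact getLast?_reduce_cons (FreeGroup.reduce_toWord w) hx ha

/-- The set `S`: reduced words not ending in a (nonzero) power of `g₂`,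
i.e. the identity together with words ending in a power of `g₁`. -/
def S : Set F₂ := {w | ∀ b : Bool, w.toWord.getLast? ≠ some (1, b)}

lemma g1_eq : g₁ = FreeGroup.mk [((0 : Fin 2), true)] := rfl
lemma g2_eq : g₂ = FreeGroup.mk [((1 : Fin 2), true)] := rfl
lemma g1_inv_eq : g₁⁻¹ = FreeGroup.mk [((0 : Fin 2), false)] := by
  rw [g1_eq, FreeGroup.inv_mk]; rfl
lemma g2_inv_eq : g₂⁻¹ = FreeGroup.mk [((1 : Fin 2), false)] := by
  rw [g2_eq, FreeGroup.inv_mk]; rfl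

lemma mem_S_lastLetter {w : F₂} (hw : w ∈ S) (b : Bool) :
    w.toWord.getLast? ≠ some ((1 : Fin 2), b) := hw b

/-- For `w ∈ S`, `g₁⁻¹ * w * g₂` ends with the letter `(1, true)`. -/
lemma hT1 {w : F₂} (hw : w ∈ S) :
    (g₁⁻¹ * w * g₂).toWord.getLast? = some ((1 : Fin 2), true) := by
  have h1 : (w * g₂).toWord = w.toWord ++ [((1 : Fin 2), true)] := by
    rw [g2_eq]
    exact toWord_mul_letter w _ (by simpa using mem_S_lastLetter hw false)
  have h2 : (w * g₂).toWord.getLast? = some ((1 : Fin 2), true) := by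
    rw [h1]; simp
  have := getLast?_toWord_letter_mul (w * g₂) ((0 : Fin 2), false) _ h2 (by decide)
  rw [← g1_inv_eq] at this
  rw [mul_assoc]
  exact this

/-- For `w ∈ S`, `g₁ * w * g₂⁻¹` ends with the letter `(1, false)`. -/
lemma hT2 {w : F₂} (hw : w ∈ S) :
    (g₁ * w * g₂⁻¹).toWord.getLast? = some ((1 : Fin 2), false) := by
  have h1 : (w * g₂⁻¹).toWord = w.toWord ++ [((1 : Fin 2), false)] := by
    rw [g2_inv_eq]
    exact toWord_mul_letter w _ (by simpa using mem_S_lastLetter hw true)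
  have h2 : (w * g₂⁻¹).toWord.getLast? = some ((1 : Fin 2), false) := by
    rw [h1]; simp
  have := getLast?_toWord_letter_mul (w * g₂⁻¹) ((0 : Fin 2), true) _ h2 (by decide)
  rw [← g1_eq] at this
  rw [mul_assoc]
  exact this

lemma notMem_S_iff {w : F₂} : w ∉ S ↔ ∃ b, w.toWord.getLast? = some ((1 : Fin 2), b) := by
  simp only [S, Set.mem_setOf_eq, not_forall, not_not]

/-- For `w ∉ S`, `g₂⁻¹ * w * g₁` ends with the letter `(0, true)`. -/
lemma hT3 {w : F₂} (hw : w ∉ S) :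
    (g₂⁻¹ * w * g₁).toWord.getLast? = some ((0 : Fin 2), true) := by
  obtain ⟨b, hb⟩ := notMem_S_iff.1 hw
  have h1 : (w * g₁).toWord = w.toWord ++ [((0 : Fin 2), true)] := by
    rw [g1_eq]
    refine toWord_mul_letter w _ ?_
    rw [hb]; simp
  have h2 : (w * g₁).toWord.getLast? = some ((0 : Fin 2), true) := by
    rw [h1]; simp
  have := getLast?_toWord_letter_mul (w * g₁) ((1 : Fin 2), false) _ h2 (by decide)
  rw [← g2_inv_eq] at this
  rw [mul_assoc]
  exact this

/-- For `w ∉ S`, `g₂ * w * g₁⁻¹` ends with the letter `(0, false)`. -/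
lemma hT4 {w : F₂} (hw : w ∉ S) :
    (g₂ * w * g₁⁻¹).toWord.getLast? = some ((0 : Fin 2), false) := by
  obtain ⟨b, hb⟩ := notMem_S_iff.1 hw
  have h1 : (w * g₁⁻¹).toWord = w.toWord ++ [((0 : Fin 2), false)] := by
    rw [g1_inv_eq]
    refine toWord_mul_letter w _ ?_
    rw [hb]; simp
  have h2 : (w * g₁⁻¹).toWord.getLast? = some ((0 : Fin 2), false) := by
    rw [h1]; simp
  have := getLast?_toWord_letter_mul (w * g₁⁻¹) ((1 : Fin 2), true) _ h2 (by decide)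
  rw [← g2_eq] at this
  rw [mul_assoc]
  exact this

/- ## Analytic part -/

/-- Summability of the difference series. -/
lemma d_summable (ξ : F₂ → ℂ) (hsum : Summable fun g => ‖ξ g‖ ^ 2) (T : F₂ ≃ F₂) :
    Summable fun g => ‖ξ (T g) - ξ g‖ ^ 2 := by
  have hT : Summable fun g => ‖ξ (T g)‖ ^ 2 := (T.summable_iff
    (f := fun g => ‖ξ g‖ ^ 2)).2 hsum
  refine Summable.of_nonneg_of_le (fun g => by positivity)
    (fun g => ?_) ((hT.mul_left 2).add (hsum.mul_left 2))
  have h1 := norm_sub_le (ξ (T g)) (ξ g)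
  nlinarith [sq_nonneg (‖ξ (T g)‖ - ‖ξ g‖), norm_nonneg (ξ (T g) - ξ g),
    norm_nonneg (ξ (T g)), norm_nonneg (ξ g)]

/-- Key lower bound: the `ξ`-mass transported by `T` from `A` is at least
`(2/3)` of the mass of `A` minus twice the almost-invariance defect. -/
lemma key_lower (ξ : F₂ → ℂ) (hsum : Summable fun g => ‖ξ g‖ ^ 2)
    (T : F₂ ≃ F₂) (A : Set F₂) :
    (2/3) * (∑' g, A.indicator (fun g => ‖ξ g‖ ^ 2) g)
      - 2 * (∑' g, ‖ξ (T g) - ξ g‖ ^ 2)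
    ≤ ∑' g, A.indicator (fun g => ‖ξ (T g)‖ ^ 2) g := by
  set f : F₂ → ℝ := fun g => ‖ξ g‖ ^ 2 with hf
  set d : F₂ → ℝ := fun g => ‖ξ (T g) - ξ g‖ ^ 2 with hd
  have hfT : Summable fun g => ‖ξ (T g)‖ ^ 2 := (T.summable_iff (f := f)).2 hsum
  have hdsum : Summable d := d_summable ξ hsum T
  have hpt : ∀ g, (2/3) * A.indicator f g ≤
      A.indicator (fun g => ‖ξ (T g)‖ ^ 2) g + 2 * d g := by
    intro g
    by_cases hg : g ∈ A
    · rw [Set.indicator_of_mem hg, Set.indicator_of_mem hg]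
      have h1 := abs_norm_sub_norm_le (ξ (T g)) (ξ g)
      rw [abs_le] at h1
      have h2 : ‖ξ g‖ ≤ ‖ξ (T g)‖ + ‖ξ (T g) - ξ g‖ := by linarith [h1.1]
      simp only [hf, hd]
      nlinarith [sq_nonneg (‖ξ (T g)‖ - 2 * ‖ξ (T g) - ξ g‖), norm_nonneg (ξ g),
        norm_nonneg (ξ (T g)), norm_nonneg (ξ (T g) - ξ g)]
    · rw [Set.indicator_of_notMem hg, Set.indicator_of_notMem hg]
      have : (0:ℝ) ≤ d g := by positivity
      linarith
  have hle : ∑' g, (2/3) * A.indicator f g ≤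
      ∑' g, (A.indicator (fun g => ‖ξ (T g)‖ ^ 2) g + 2 * d g) :=
    Summable.tsum_le_tsum hpt ((hsum.indicator A).mul_left _)
      ((hfT.indicator A).add (hdsum.mul_left 2))
  rw [tsum_mul_left] at hle
  rw [Summable.tsum_add (hfT.indicator A) (hdsum.mul_left 2), tsum_mul_left] at hle
  have hind : ∀ g, A.indicator d g ≤ d g := by
    intro g
    by_cases hg : g ∈ A
    · rw [Set.indicator_of_mem hg]
    · rw [Set.indicator_of_notMem hg]; positivity
  linarith [Summable.tsum_le_tsum hind (hdsum.indicator A) hdsum]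

/-- If `T` maps `A` into `A'`, the transported mass of `A` is at most the mass of `A'`. -/
lemma image_le (ξ : F₂ → ℂ) (hsum : Summable fun g => ‖ξ g‖ ^ 2)
    (T : F₂ ≃ F₂) (A A' : Set F₂) (h : ∀ w ∈ A, T w ∈ A') :
    ∑' g, A.indicator (fun g => ‖ξ (T g)‖ ^ 2) g
      ≤ ∑' g, A'.indicator (fun g => ‖ξ g‖ ^ 2) g := by
  set f : F₂ → ℝ := fun g => ‖ξ g‖ ^ 2 with hf
  have hfT : Summable fun g => ‖ξ (T g)‖ ^ 2 := (T.summable_iff (f := f)).2 hsum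
  have hcomp : Summable fun g => A'.indicator f (T g) :=
    (T.summable_iff (f := A'.indicator f)).2 (hsum.indicator A')
  have hpt : ∀ g, A.indicator (fun g => ‖ξ (T g)‖ ^ 2) g ≤ A'.indicator f (T g) := by
    intro g
    by_cases hg : g ∈ A
    · rw [Set.indicator_of_mem hg, Set.indicator_of_mem (h g hg)]
    · rw [Set.indicator_of_notMem hg]
      exact Set.indicator_nonneg (fun x _ => by positivity) _
  calc ∑' g, A.indicator (fun g => ‖ξ (T g)‖ ^ 2) g
      ≤ ∑' g, A'.indicator f (T g) := Summable.tsum_le_tsum hpt (hfT.indicator A) hcomp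
    _ = ∑' g, A'.indicator f g := T.tsum_eq (A'.indicator f)

/-- Three disjoint sets have total mass at most the full mass. -/
lemma disj3 (f : F₂ → ℝ) (hpos : ∀ g, 0 ≤ f g) (hsum : Summable f)
    (A B C : Set F₂) (hAB : Disjoint A B) (hAC : Disjoint A C) (hBC : Disjoint B C) :
    (∑' g, A.indicator f g) + (∑' g, B.indicator f g) + (∑' g, C.indicator f g)
      ≤ ∑' g, f g := by
  have hA := hsum.indicator A
  have hB := hsum.indicator B
  have hC := hsum.indicator C
  have hpt : ∀ g, A.indicator f g + B.indicator f g + C.indicator f g ≤ f g := by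
    intro g
    by_cases hga : g ∈ A
    · have hgb : g ∉ B := fun hgb => hAB.ne_of_mem hga hgb rfl
      have hgc : g ∉ C := fun hgc => hAC.ne_of_mem hga hgc rfl
      rw [Set.indicator_of_mem hga, Set.indicator_of_notMem hgb,
        Set.indicator_of_notMem hgc]
      simp
    · rw [Set.indicator_of_notMem hga]
      by_cases hgb : g ∈ B
      · have hgc : g ∉ C := fun hgc => hBC.ne_of_mem hgb hgc rfl
        rw [Set.indicator_of_mem hgb, Set.indicator_of_notMem hgc]
        simp
      · rw [Set.indicator_of_notMem hgb]
        by_cases hgc : g ∈ C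
        · rw [Set.indicator_of_mem hgc]; simp
        · rw [Set.indicator_of_notMem hgc]; simpa using hpos g
  calc (∑' g, A.indicator f g) + (∑' g, B.indicator f g) + (∑' g, C.indicator f g)
      = ∑' g, (A.indicator f g + B.indicator f g + C.indicator f g) := by
        rw [Summable.tsum_add (hA.add hB) hC, Summable.tsum_add hA hB]
    _ ≤ ∑' g, f g := Summable.tsum_le_tsum hpt ((hA.add hB).add hC) hsum

/-- The defect of `T.symm` equals the defect of `T`. -/
lemma eps_symm (ξ : F₂ → ℂ) (T : F₂ ≃ F₂) :
    (∑' g, ‖ξ (T.symm g) - ξ g‖ ^ 2) = ∑' g, ‖ξ (T g) - ξ g‖ ^ 2 := by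
  rw [← T.tsum_eq (fun g => ‖ξ (T.symm g) - ξ g‖ ^ 2)]
  simp only [Equiv.symm_apply_apply]
  congr 1
  ext g
  rw [norm_sub_rev]

end MagajnaAux

/-- The non-existence of simultaneously almost-invariant unit vectors established in Example 2.6
of Magajna, "Pointwise approximation by elementary complete contractions": for every unit vector
`ξ ∈ ℓ²(F₂)`, at least one of the three almost-invariance sums is at least `1/196`. -/
theorem exists_invariance_sum_ge
    (ξ : F₂ → ℂ) (hsum : Summable fun g => ‖ξ g‖ ^ 2) (hξ : ∑' g, ‖ξ g‖ ^ 2 = 1) :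
    1 / 196 ≤ (∑' g : F₂, ‖ξ (g₁⁻¹ * g * g₂) - ξ g‖ ^ 2) ∨
    1 / 196 ≤ (∑' g : F₂, ‖ξ (g₁ * g * g₂⁻¹) - ξ g‖ ^ 2) ∨
    1 / 196 ≤ (∑' g : F₂, ‖ξ (g₂⁻¹ * g * g₁) - ξ g‖ ^ 2) := by
  open MagajnaAux in
  by_contra hcon
  push_neg at hcon
  obtain ⟨hc1, hc2, hc3⟩ := hcon
  set f : F₂ → ℝ := fun g => ‖ξ g‖ ^ 2 with hf
  -- the three equivalences
  set T₁ : F₂ ≃ F₂ := (Equiv.mulLeft g₁⁻¹).trans (Equiv.mulRight g₂) with hT₁def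
  set T₂ : F₂ ≃ F₂ := (Equiv.mulLeft g₁).trans (Equiv.mulRight g₂⁻¹) with hT₂def
  set T₃ : F₂ ≃ F₂ := (Equiv.mulLeft g₂⁻¹).trans (Equiv.mulRight g₁) with hT₃def
  have hT₁app : ∀ g, T₁ g = g₁⁻¹ * g * g₂ := fun g => rfl
  have hT₂app : ∀ g, T₂ g = g₁ * g * g₂⁻¹ := fun g => rfl
  have hT₃app : ∀ g, T₃ g = g₂⁻¹ * g * g₁ := fun g => rfl
  have hT₃symm : ∀ g, T₃.symm g = g₂ * g * g₁⁻¹ := by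
    intro g
    simp [hT₃def, Equiv.symm_apply_eq, hT₃app, mul_assoc]
  -- masses
  set s : ℝ := ∑' g, (MagajnaAux.S).indicator f g with hs
  set q : ℝ := ∑' g, (MagajnaAux.Sᶜ).indicator f g with hq
  -- target sets
  set A₁ : Set F₂ := {w | w.toWord.getLast? = some ((1 : Fin 2), true)} with hA₁
  set A₂ : Set F₂ := {w | w.toWord.getLast? = some ((1 : Fin 2), false)} with hA₂
  set B₁ : Set F₂ := {w | w.toWord.getLast? = some ((0 : Fin 2), true)} with hB₁
  set B₂ : Set F₂ := {w | w.toWord.getLast? = some ((0 : Fin 2), false)} with hB₂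
  -- disjointness
  have hdSA₁ : Disjoint MagajnaAux.S A₁ := by
    rw [Set.disjoint_left]; intro w hw hw'
    exact mem_S_lastLetter hw true hw'
  have hdSA₂ : Disjoint MagajnaAux.S A₂ := by
    rw [Set.disjoint_left]; intro w hw hw'
    exact mem_S_lastLetter hw false hw'
  have hdA₁A₂ : Disjoint A₁ A₂ := by
    rw [Set.disjoint_left]; intro w hw hw'
    rw [hA₁, Set.mem_setOf_eq] at hw
    rw [hA₂, Set.mem_setOf_eq] at hw'
    rw [hw] at hw'
    simp at hw'
  have hdQB₁ : Disjoint MagajnaAux.Sᶜ B₁ := by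
    rw [Set.disjoint_left]; intro w hw hw'
    obtain ⟨b, hb⟩ := notMem_S_iff.1 hw
    rw [hB₁, Set.mem_setOf_eq, hb] at hw'
    simp at hw'
  have hdQB₂ : Disjoint MagajnaAux.Sᶜ B₂ := by
    rw [Set.disjoint_left]; intro w hw hw'
    obtain ⟨b, hb⟩ := notMem_S_iff.1 hw
    rw [hB₂, Set.mem_setOf_eq, hb] at hw'
    simp at hw'
  have hdB₁B₂ : Disjoint B₁ B₂ := by
    rw [Set.disjoint_left]; intro w hw hw'
    rw [hB₁, Set.mem_setOf_eq] at hw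
    rw [hB₂, Set.mem_setOf_eq] at hw'
    rw [hw] at hw'
    simp at hw'
  have hfpos : ∀ g, 0 ≤ f g := fun g => by positivity
  -- total bounds
  have htotS : s + (∑' g, A₁.indicator f g) + (∑' g, A₂.indicator f g) ≤ 1 := by
    rw [hs, ← hξ]
    exact disj3 f hfpos hsum _ _ _ hdSA₁ hdSA₂ hdA₁A₂
  have htotQ : q + (∑' g, B₁.indicator f g) + (∑' g, B₂.indicator f g) ≤ 1 := by
    rw [hq, ← hξ]
    exact disj3 f hfpos hsum _ _ _ hdQB₁ hdQB₂ hdB₁B₂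
  -- defects
  have hε₁ : (∑' g, ‖ξ (T₁ g) - ξ g‖ ^ 2) < 1 / 196 := by
    simpa only [hT₁app] using hc1
  have hε₂ : (∑' g, ‖ξ (T₂ g) - ξ g‖ ^ 2) < 1 / 196 := by
    simpa only [hT₂app] using hc2
  have hε₃ : (∑' g, ‖ξ (T₃ g) - ξ g‖ ^ 2) < 1 / 196 := by
    simpa only [hT₃app] using hc3
  have hε₄ : (∑' g, ‖ξ (T₃.symm g) - ξ g‖ ^ 2) < 1 / 196 := by
    rw [eps_symm]; exact hε₃
  -- lower bounds on transported masses
  have hk₁ := key_lower ξ hsum T₁ MagajnaAux.S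
  have hk₂ := key_lower ξ hsum T₂ MagajnaAux.S
  have hk₃ := key_lower ξ hsum T₃ MagajnaAux.Sᶜ
  have hk₄ := key_lower ξ hsum T₃.symm MagajnaAux.Sᶜ
  have hi₁ := image_le ξ hsum T₁ MagajnaAux.S A₁ (fun w hw => by
    rw [hA₁, Set.mem_setOf_eq, hT₁app]; exact hT1 hw)
  have hi₂ := image_le ξ hsum T₂ MagajnaAux.S A₂ (fun w hw => by
    rw [hA₂, Set.mem_setOf_eq, hT₂app]; exact hT2 hw)
  have hi₃ := image_le ξ hsum T₃ MagajnaAux.Sᶜ B₁ (fun w hw => by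
    rw [hB₁, Set.mem_setOf_eq, hT₃app]; exact hT3 hw)
  have hi₄ := image_le ξ hsum T₃.symm MagajnaAux.Sᶜ B₂ (fun w hw => by
    rw [hB₂, Set.mem_setOf_eq, hT₃symm]; exact hT4 hw)
  -- s + q = 1
  have hsq : s + q = 1 := by
    rw [hs, hq, ← Summable.tsum_add (hsum.indicator _) (hsum.indicator _), ← hξ]
    congr 1
    ext g
    by_cases hg : g ∈ MagajnaAux.S
    · rw [Set.indicator_of_mem hg, Set.indicator_of_notMem (by simpa using hg)]
      simp
    · rw [Set.indicator_of_notMem hg, Set.indicator_of_mem (by simpa using hg)]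
      simp
  linarith
end

section
/- Let F₂ be the free group on two generators g₁, g₂ and let ℓ²(F₂) be the Hilbert space of square-summable complex-valued functions on F₂. For g ∈ F₂ let L_g and R_g be the left and right translation unitaries on ℓ²(F₂), given by (L_g ξ)(h) = ξ(g⁻¹h) and (R_g ξ)(h) = ξ(hg). Then there is no unitary operator u on ℓ²(F₂) such that u R_g = R_g u for all g ∈ F₂ and u L_{g₁} u⁻¹ = L_{g₂} and u L_{g₂} u⁻¹ = L_{g₁}. -/
open scoped ENNReal

noncomputable section

/-!
If `u` existed, `ξ = u δ₁`, with `δ₁` the point mass at `1`, would satisfy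
`L g₂ ξ = u (L g₁ δ₁) = u (R g₁⁻¹ δ₁) = R g₁⁻¹ ξ`, i.e. `ξ (g₂⁻¹ k g₁) = ξ k` for all `k`.
The orbits `g₂⁻ⁿ k g₁ⁿ` are infinite (the exponent sum of `g₁` grows along them), so a
square-summable `ξ` constant on them vanishes, contradicting `‖ξ‖ = ‖δ₁‖ = 1`.
-/

open Function

theorem Memℓp.eq_zero_of_comp_eq_self {α E : Type*} [NormedAddCommGroup E] {p : ℝ≥0∞}
    {f : α → E} (hf : Memℓp f p) (hp : 0 < p.toReal) {φ : α → α}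
    (hφ : ∀ a, Injective fun n : ℕ => φ^[n] a) (hfφ : f ∘ φ = f) : f = 0 := by
  funext a
  have hsum : Summable fun n : ℕ => ‖f (φ^[n] a)‖ ^ p.toReal :=
    (hf.summable hp).comp_injective (hφ a)
  simp only [← comp_apply (f := f), iterate_invariant hfφ, summable_const_iff] at hsum
  exact norm_eq_zero.mp ((Real.rpow_eq_zero (norm_nonneg _) hp.ne').mp hsum)

theorem injective_iterate_mul_mul_of_monoidHom {G M : Type*} [Group G] [Group M]
    (χ : G →* M) {a b : G} (hb : χ b = 1) (ha : Injective fun n : ℕ => χ a ^ n) (k : G) :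
    Injective fun n : ℕ => (fun x => b * x * a)^[n] k := by
  have hχ : ∀ n : ℕ, χ ((fun x => b * x * a)^[n] k) = χ k * χ a ^ n := by
    intro n
    induction n with
    | zero => simp
    | succ n ih => rw [iterate_succ_apply', map_mul, map_mul, ih, hb, one_mul, pow_succ, mul_assoc]
  intro m n hmn
  exact ha (mul_left_cancel (by simpa only [hχ] using congrArg χ hmn))

def g₁ExpSum : F₂ →* Multiplicative ℤ :=
  FreeGroup.lift fun i => if i = 0 then Multiplicative.ofAdd 1 else 1

theorem injective_iterate_flip (k : F₂) :
    Injective fun n : ℕ => (fun x => g₂⁻¹ * x * g₁)^[n] k := by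
  refine injective_iterate_mul_mul_of_monoidHom g₁ExpSum ?_ ?_ k
  · simp [g₁ExpSum, g₂]
  · intro m n hmn
    simpa [g₁ExpSum, g₁, ← ofAdd_nsmul] using hmn

local notation "δ₁" => (lp.single 2 (1 : F₂) (1 : ℂ) : l2F₂)

theorem L_single_one (g : F₂) : L g δ₁ = R g⁻¹ δ₁ := by
  ext h
  simp [lp.single_apply, Pi.single_apply, inv_mul_eq_one, mul_inv_eq_one, eq_comm]

theorem apply_single_one_comp_eq_self {u : l2F₂ →L[ℂ] l2F₂} {a b : F₂}
    (hR : u * R a⁻¹ = R a⁻¹ * u) (hL : u * L a = L b * u) :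
    ⇑(u δ₁) ∘ (fun k => b⁻¹ * k * a) = ⇑(u δ₁) := by
  have h : L b (u δ₁) = R a⁻¹ (u δ₁) :=
    calc L b (u δ₁) = u (L a δ₁) := (DFunLike.congr_fun hL δ₁).symm
      _ = u (R a⁻¹ δ₁) := by rw [L_single_one]
      _ = R a⁻¹ (u δ₁) := DFunLike.congr_fun hR δ₁
  funext k
  simpa [mul_assoc] using congrArg (fun ξ : l2F₂ => ξ (k * a)) h

/-- The classical fact reproved in Example 2.6 of Magajna, "Pointwise approximation by
elementary complete contractions": there is no unitary `u` on `ℓ²(F₂)` commuting with all right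
translations `R g` and conjugating `L g₁` to `L g₂` and `L g₂` to `L g₁` (the flip automorphism
of the group von Neumann algebra of `F₂` is not inner). -/
theorem no_unitary_flip :
    ¬ ∃ u : l2F₂ →L[ℂ] l2F₂, u ∈ unitary (l2F₂ →L[ℂ] l2F₂) ∧
      (∀ g : F₂, u * R g = R g * u) ∧
      u * L g₁ * star u = L g₂ ∧ u * L g₂ * star u = L g₁ := by
  rintro ⟨u, hu, hR, hL, -⟩
  have hL' : u * L g₁ = L g₂ * u := by
    rw [← hL, mul_assoc _ (star u), Unitary.star_mul_self_of_mem hu, mul_one]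
  have hzero : u δ₁ = 0 :=
    lp.ext <| (lp.memℓp _).eq_zero_of_comp_eq_self (by norm_num) injective_iterate_flip
      (apply_single_one_comp_eq_self (hR g₁⁻¹) hL')
  have hnorm := ContinuousLinearMap.norm_map_of_mem_unitary hu δ₁
  rw [hzero, lp.norm_single (by norm_num)] at hnorm
  norm_num at hnorm

end
end
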